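/- arXiv:2510.20995 — 5 statements merged into one kernel-verified Lean document; each statement's English description precedes it below -/
import Mathlib

section
/- For each fixed x ∈ ℝ, the map y ↦ Ψ(x,y) = (max{0, 2x + y}² − y²)/4 is concave on ℝ. -/
noncomputable def Psi (x y : ℝ) : ℝ := ((max 0 (2 * x + y)) ^ 2 - y ^ 2) / 4

lemma psi_le (x y m : ℝ) (hm : x ≤ m) : Psi x y ≤ m * y + m ^ 2 := by
  unfold Psi
  rcases le_total (2 * x + y) 0 with h | h
  · rw [max_eq_left h]; nlinarith [sq_nonneg (m + y / 2)]
  · rw [max_eq_right h]; nlinarith [sq_nonneg (m + y / 2)]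

lemma psi_eq (x y : ℝ) : Psi x y = (max x (-y / 2)) * y + (max x (-y / 2)) ^ 2 := by
  unfold Psi
  rcases le_total (2 * x + y) 0 with h | h
  · rw [max_eq_left h, max_eq_right (by linarith)]; ring
  · rw [max_eq_right h, max_eq_left (by linarith)]; ring

theorem psi_concave_in_y (x : ℝ) :
    ConcaveOn ℝ Set.univ (fun y : ℝ => Psi x y) := by
  refine ⟨convex_univ, ?_⟩
  intro y _ z _ a b ha hb hab
  simp only [smul_eq_mul]
  set c := a * y + b * z with hc
  set m := max x (-c / 2) with hm
  have hxm : x ≤ m := le_max_left _ _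
  have h1 := psi_le x y m hxm
  have h2 := psi_le x z m hxm
  have h3 := psi_eq x c
  rw [← hm] at h3
  rw [h3]
  have key : a * (m * y + m ^ 2) + b * (m * z + m ^ 2) = m * c + m ^ 2 := by
    rw [hc]; linear_combination m ^ 2 * hab
  nlinarith [mul_le_mul_of_nonneg_left h1 ha, mul_le_mul_of_nonneg_left h2 hb]
end

section
/- If the perturbation function p : ℝ^m → ℝ is lower semicontinuous at 0, bounded below on ℝ^m by an affine-plus-quadratic minorant, then sup over (λ, α) ∈ ℝ^m × (0,∞) of inf_u [ p(u) + ⟨λ, u⟩ + α‖u‖² ] equals p(0); i.e., quadratic augmentation closes the duality gap for lsc stable perturbation functions that satisfy the growth condition. -/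
/-!
Weak duality is evaluation of the inner infimum at `u = 0`. For the converse fix a real `c < p 0`
and put `f u = p u + ⟨λ₀, u⟩ + α₀ ‖u‖²`, which is bounded below by some real `B` and lower
semicontinuous at `0` with `f 0 = p 0`. Near the origin `f > c` already; away from it `‖u‖²` is
bounded below by some `δ > 0`, so raising the penalty parameter from `α₀` to `α₀ + t` with
`t δ ≥ c - B` lifts `f` above `c` there as well.
-/

open Filter Topology

theorem LowerSemicontinuousAt.add_coe_real {X : Type*} [TopologicalSpace X] {x₀ : X}
    {f : X → EReal} {g : X → ℝ} (hf : LowerSemicontinuousAt f x₀) (hg : ContinuousAt g x₀) :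
    LowerSemicontinuousAt (fun x => f x + (g x : EReal)) x₀ :=
  hf.add' (continuous_coe_real_ereal.continuousAt.comp hg).lowerSemicontinuousAt
    (EReal.continuousAt_add (Or.inr (EReal.coe_ne_bot _)) (Or.inr (EReal.coe_ne_top _)))

theorem EReal.exists_coe_le_of_ne_bot {a : EReal} (ha : a ≠ ⊥) : ∃ B : ℝ, (B : EReal) ≤ a := by
  obtain ⟨B, -, hB⟩ := EReal.lt_iff_exists_real_btwn.1 (bot_lt_iff_ne_bot.2 ha)
  exact ⟨B, hB.le⟩

theorem eventually_forall_coe_le_add_mul_penalty {X : Type*} [TopologicalSpace X] {x₀ : X}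
    {f : X → EReal} {σ : X → ℝ} (hf : LowerSemicontinuousAt f x₀) (hbdd : ⨅ x, f x ≠ ⊥)
    (hσ_nonneg : ∀ x, 0 ≤ σ x) (hσ_small : ∀ U ∈ 𝓝 x₀, ∃ δ > 0, ∀ x, σ x < δ → x ∈ U)
    {c : ℝ} (hc : (c : EReal) < f x₀) :
    ∀ᶠ t in atTop, ∀ x, (c : EReal) ≤ f x + ((t * σ x : ℝ) : EReal) := by
  obtain ⟨B, hB⟩ := EReal.exists_coe_le_of_ne_bot hbdd
  obtain ⟨δ, hδ, hnear⟩ := hσ_small _ (hf c hc)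
  filter_upwards [eventually_ge_atTop 0, eventually_ge_atTop ((c - B) / δ)] with t ht₀ htδ x
  by_cases hx : σ x < δ
  · exact le_add_of_le_of_nonneg (hnear x hx).le
      (EReal.coe_nonneg.2 (mul_nonneg ht₀ (hσ_nonneg x)))
  · have hpen : c - B ≤ t * σ x :=
      calc c - B ≤ t * δ := (div_le_iff₀ hδ).1 htδ
        _ ≤ t * σ x := mul_le_mul_of_nonneg_left (not_lt.1 hx) ht₀
    calc (c : EReal) = (B : EReal) + ((c - B : ℝ) : EReal) := by rw [← EReal.coe_add]; ring_nf
      _ ≤ f x + ((t * σ x : ℝ) : EReal) :=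
        add_le_add ((iInf_le f x).trans' hB) (EReal.coe_le_coe_iff.2 hpen)

theorem exists_sum_sq_lt_imp_mem {m : ℕ} {U : Set (Fin m → ℝ)} (hU : U ∈ 𝓝 0) :
    ∃ δ > 0, ∀ u : Fin m → ℝ, ∑ i, u i ^ 2 < δ → u ∈ U := by
  obtain ⟨ε, hε, hball⟩ := Metric.mem_nhds_iff.1 hU
  refine ⟨ε ^ 2, by positivity, fun u hu => hball ?_⟩
  rw [mem_ball_zero_iff, pi_norm_lt_iff hε]
  intro i
  have hi : u i ^ 2 < ε ^ 2 :=
    (Finset.single_le_sum (fun j _ => sq_nonneg (u j)) (Finset.mem_univ i)).trans_lt hu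
  exact abs_lt_of_sq_lt_sq hi hε.le

section AugmentedLagrangian

variable {m : ℕ} (p : (Fin m → ℝ) → EReal)

noncomputable def augmentedLagrangian (lam : Fin m → ℝ) (α : ℝ) (u : Fin m → ℝ) : EReal :=
  p u + ((∑ i, lam i * u i + α * ∑ i, u i ^ 2 : ℝ) : EReal)

@[simp]
theorem augmentedLagrangian_zero (lam : Fin m → ℝ) (α : ℝ) :
    augmentedLagrangian p lam α 0 = p 0 := by
  simp [augmentedLagrangian]

theorem augmentedLagrangian_add_penalty (lam : Fin m → ℝ) (α t : ℝ) (u : Fin m → ℝ) :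
    augmentedLagrangian p lam α u + ((t * ∑ i, u i ^ 2 : ℝ) : EReal)
      = augmentedLagrangian p lam (α + t) u := by
  rw [augmentedLagrangian, augmentedLagrangian, add_assoc, ← EReal.coe_add]
  ring_nf

variable {p} in
theorem LowerSemicontinuousAt.augmentedLagrangian (hp : LowerSemicontinuousAt p 0)
    (lam : Fin m → ℝ) (α : ℝ) : LowerSemicontinuousAt (augmentedLagrangian p lam α) 0 :=
  hp.add_coe_real (by fun_prop)

end AugmentedLagrangian

theorem strong_duality_from_stability_general {m : ℕ} (p : (Fin m → ℝ) → EReal)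
    (hlsc : LowerSemicontinuousAt p 0)
    (hgrowth : ∃ (lam₀ : Fin m → ℝ) (α₀ : ℝ), 0 < α₀ ∧
        (⨅ u : Fin m → ℝ,
          (p u + ((∑ i, lam₀ i * u i + α₀ * ∑ i, (u i) ^ 2 : ℝ) : EReal))) ≠ ⊥) :
    (⨆ lam : Fin m → ℝ, ⨆ α : ℝ, ⨆ _ : 0 < α,
        ⨅ u : Fin m → ℝ,
          (p u + ((∑ i, lam i * u i + α * ∑ i, (u i) ^ 2 : ℝ) : EReal)))
      = p 0 := by
  obtain ⟨lam₀, α₀, hα₀, hbdd⟩ := hgrowth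
  change ⨆ lam, ⨆ α, ⨆ _ : 0 < α, ⨅ u, augmentedLagrangian p lam α u = p 0
  have weak_duality (lam : Fin m → ℝ) (α : ℝ) : ⨅ u, augmentedLagrangian p lam α u ≤ p 0 :=
    (iInf_le _ 0).trans_eq (augmentedLagrangian_zero p lam α)
  refine le_antisymm (iSup_le fun lam => iSup₂_le fun α _ => weak_duality lam α)
    (EReal.ge_of_forall_gt_iff_ge.1 fun c hc => ?_)
  obtain ⟨t, ht₀, hc_le⟩ := ((eventually_ge_atTop 0).and
    (eventually_forall_coe_le_add_mul_penalty (hlsc.augmentedLagrangian lam₀ α₀) hbdd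
      (fun u => Finset.sum_nonneg fun i _ => sq_nonneg (u i)) (fun _ => exists_sum_sq_lt_imp_mem)
      (by rwa [augmentedLagrangian_zero]))).exists
  refine le_iSup_of_le lam₀ (le_iSup_of_le (α₀ + t) (le_iSup_of_le (by linarith) ?_))
  exact le_iInf fun u => (hc_le u).trans_eq (augmentedLagrangian_add_penalty p lam₀ α₀ t u)

/-- Quadratic augmentation closes the duality gap for lsc perturbation functions
satisfying the growth condition. -/
theorem strong_duality_from_stability {m : ℕ} (p : (Fin m → ℝ) → EReal)
    (hne_bot : ∀ u, p u ≠ ⊥)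
    (hfin : ∃ r : ℝ, p 0 = (r : EReal))
    (hlsc : LowerSemicontinuousAt p 0)
    (hgrowth : ∃ (lam₀ : Fin m → ℝ) (α₀ : ℝ), 0 < α₀ ∧
        (⨅ u : Fin m → ℝ,
          (p u + ((∑ i, lam₀ i * u i + α₀ * ∑ i, (u i) ^ 2 : ℝ) : EReal))) ≠ ⊥) :
    (⨆ lam : Fin m → ℝ, ⨆ α : ℝ, ⨆ _ : 0 < α,
        ⨅ u : Fin m → ℝ,
          (p u + ((∑ i, lam i * u i + α * ∑ i, (u i) ^ 2 : ℝ) : EReal)))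
      = p 0 :=
  strong_duality_from_stability_general p hlsc hgrowth
end

section
/- Two-sided estimation bound (PACC): under the events that (a) |ℓᵢ(θ) − ℓ̂ᵢ(θ)| ≤ ζ̄ for all θ ∈ Θ and all i = 0,…,m, (b) the statistical problem satisfies p(0) ≤ p(u) + ⟨λ*,u⟩ + α*‖u‖² globally, and (c) the empirical problem satisfies p̂(0) ≤ p̂(u) + ⟨λ̂*,u⟩ + α̂*‖u‖² globally, any empirical minimizer θ̂* (satisfying ℓ̂ᵢ(θ̂*) ≤ 0 for all i and ℓ̂₀(θ̂*) = p̂(0)) satisfies |P* − ℓ₀(θ̂*)| ≤ (2 + Δ_λ)·ζ̄ + Δ_α·m·ζ̄², where P* = p(0), Δ_λ = max(‖λ*‖₁, ‖λ̂*‖₁) and Δ_α = max(α*, α̂*). -/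
open scoped BigOperators

/-- Deterministic core of the PAC-Constrained dual learning theorem: two-sided
estimation bound for an empirical minimizer, conditioning on the uniform-convergence
events and dual attainment (second-order stability) for both the statistical and
empirical problems. -/
theorem pacc_two_sided_bound {Θ : Type*} {m : ℕ}
    (ℓ₀ : Θ → ℝ) (ℓ : Fin m → Θ → ℝ)
    (ℓhat₀ : Θ → ℝ) (ℓhat : Fin m → Θ → ℝ)
    (ζbar : ℝ) (hζ : 0 ≤ ζbar)
    -- (a) uniform estimation errors
    (hunif₀ : ∀ θ, |ℓ₀ θ - ℓhat₀ θ| ≤ ζbar)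
    (hunif : ∀ i θ, |ℓ i θ - ℓhat i θ| ≤ ζbar)
    -- statistical minimizer θ*
    (θStar : Θ) (hfeasStar : ∀ i, ℓ i θStar ≤ 0)
    (hoptStar : ∀ θ, (∀ i, ℓ i θ ≤ 0) → ℓ₀ θStar ≤ ℓ₀ θ)
    -- empirical minimizer θ̂*
    (θhatStar : Θ) (hfeasHat : ∀ i, ℓhat i θhatStar ≤ 0)
    (hoptHat : ∀ θ, (∀ i, ℓhat i θ ≤ 0) → ℓhat₀ θhatStar ≤ ℓhat₀ θ)
    -- dual multipliers
    (lamStar lamHat : Fin m → ℝ) (hlamStar : ∀ i, 0 ≤ lamStar i)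
    (hlamHat : ∀ i, 0 ≤ lamHat i)
    (αStar αHat : ℝ) (hαStar : 0 < αStar) (hαHat : 0 < αHat)
    -- (b) statistical stability: p(0) ≤ p(u) + ⟨λ*,u⟩ + α*‖u‖² for all u
    (hstab : ∀ (u : Fin m → ℝ) (θ : Θ), (∀ i, ℓ i θ ≤ u i) →
        ℓ₀ θStar ≤ ℓ₀ θ + ∑ i, lamStar i * u i + αStar * ∑ i, (u i) ^ 2)
    -- (c) empirical stability: p̂(0) ≤ p̂(u) + ⟨λ̂*,u⟩ + α̂*‖u‖² for all u
    (hstabHat : ∀ (u : Fin m → ℝ) (θ : Θ), (∀ i, ℓhat i θ ≤ u i) →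
        ℓhat₀ θhatStar ≤ ℓhat₀ θ + ∑ i, lamHat i * u i + αHat * ∑ i, (u i) ^ 2) :
    |ℓ₀ θStar - ℓ₀ θhatStar|
      ≤ (2 + max (∑ i, |lamStar i|) (∑ i, |lamHat i|)) * ζbar
        + max αStar αHat * m * ζbar ^ 2 := by
  have hm : (0:ℝ) ≤ (m : ℝ) * ζbar ^ 2 := by positivity
  have hS : ∑ i, lamStar i ≤ max (∑ i, |lamStar i|) (∑ i, |lamHat i|) := by
    simp only [fun i => abs_of_nonneg (hlamStar i)]; exact le_max_left _ _
  have hH : ∑ i, lamHat i ≤ max (∑ i, |lamStar i|) (∑ i, |lamHat i|) := by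
    simp only [fun i => abs_of_nonneg (hlamHat i)]; exact le_max_right _ _
  have e1 : ∀ lam : Fin m → ℝ, ∑ i, lam i * ζbar = (∑ i, lam i) * ζbar := by
    intro lam; rw [Finset.sum_mul]
  have e2 : ∑ _i : Fin m, ζbar ^ 2 = (m : ℝ) * ζbar ^ 2 := by
    simp [Finset.sum_const, nsmul_eq_mul]
  have h1 : ℓ₀ θStar ≤ ℓ₀ θhatStar + (∑ i, lamStar i) * ζbar + αStar * ((m : ℝ) * ζbar ^ 2) := by
    have hf : ∀ i, ℓ i θhatStar ≤ ζbar := by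
      intro i
      have h := (abs_le.mp (hunif i θhatStar)).2
      have := hfeasHat i
      linarith
    have h := hstab (fun _ => ζbar) θhatStar hf
    simpa only [e1, e2] using h
  have h2 : ℓhat₀ θhatStar ≤ ℓhat₀ θStar + (∑ i, lamHat i) * ζbar + αHat * ((m : ℝ) * ζbar ^ 2) := by
    have hf : ∀ i, ℓhat i θStar ≤ ζbar := by
      intro i
      have h := (abs_le.mp (hunif i θStar)).1
      have := hfeasStar i
      linarith
    have h := hstabHat (fun _ => ζbar) θStar hf
    simpa only [e1, e2] using h
  have h3 := abs_le.mp (hunif₀ θhatStar)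
  have h4 := abs_le.mp (hunif₀ θStar)
  have b1 : (∑ i, lamStar i) * ζbar ≤ max (∑ i, |lamStar i|) (∑ i, |lamHat i|) * ζbar :=
    mul_le_mul_of_nonneg_right hS hζ
  have b2 : (∑ i, lamHat i) * ζbar ≤ max (∑ i, |lamStar i|) (∑ i, |lamHat i|) * ζbar :=
    mul_le_mul_of_nonneg_right hH hζ
  have c1 : αStar * ((m : ℝ) * ζbar ^ 2) ≤ max αStar αHat * ((m : ℝ) * ζbar ^ 2) :=
    mul_le_mul_of_nonneg_right (le_max_left _ _) hm
  have c2 : αHat * ((m : ℝ) * ζbar ^ 2) ≤ max αStar αHat * ((m : ℝ) * ζbar ^ 2) :=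
    mul_le_mul_of_nonneg_right (le_max_right _ _) hm
  rw [abs_sub_le_iff]
  constructor <;> nlinarith [b1, b2, c1, c2, h1, h2, h3.1, h3.2, h4.1, h4.2, hζ]
end

section
/- If a sequence (θ_k) in Θ satisfies L(θ_k, λ_k, α_k) ≤ g(λ_k, α_k) + ε_k with ε_k → 0, the dual values satisfy g(λ_k, α_k − δ) → sup(D) < ∞ for some fixed δ > 0, and ℓ₀ is bounded below, then limsup_k max{0, ℓᵢ(θ_k)} = 0 for each i = 1,…,m; i.e., the primal iterates are asymptotically feasible. In particular, the key inequality δ·Σᵢ max{0, ℓᵢ(θ_k)}² ≤ L(θ_k, λ_k, α_k) − L(θ_k, λ_k, α_k − δ) ≤ g(λ_k, α_k) + ε_k − g(λ_k, α_k − δ) holds for all k. -/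
open scoped BigOperators
open Filter

/-- Augmented Lagrangian. -/
noncomputable def augL {Θ : Type*} {m : ℕ} (ℓ₀ : Θ → ℝ) (ℓ : Fin m → Θ → ℝ)
    (θ : Θ) (lam : Fin m → ℝ) (α : ℝ) : ℝ :=
  ℓ₀ θ + α * ∑ i, Psi (ℓ i θ) (lam i / α)

/-- Augmented dual function, valued in `EReal`. -/
noncomputable def augG {Θ : Type*} {m : ℕ} (ℓ₀ : Θ → ℝ) (ℓ : Fin m → Θ → ℝ)
    (lam : Fin m → ℝ) (α : ℝ) : EReal :=
  ⨅ θ : Θ, ((augL ℓ₀ ℓ θ lam α : ℝ) : EReal)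

/-!
For `s ≥ 0` the perspective `t ↦ t * Psi x (s / t)` grows with slope at least `max 0 x ^ 2`, so
`L(θ, λ, α) - L(θ, λ, α - δ) ≥ δ * ∑ i, max 0 (ℓ i θ) ^ 2`. Along the iterates the first term is at
most `g(λ_k, α_k) + ε_k ≤ sup D + ε_k` and the second at least `g(λ_k, α_k - δ) → sup D`, which
squeezes the penalty to `0`.
-/

open Topology

lemma mul_Psi_div (x s : ℝ) {t : ℝ} (ht : 0 < t) :
    t * Psi x (s / t) = (max 0 (2 * t * x + s) ^ 2 - s ^ 2) / (4 * t) := by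
  have : 2 * x + s / t = (2 * t * x + s) / t := by field_simp
  rw [Psi, this, ← zero_div t, max_div_div_right ht.le, zero_div]
  field_simp

-- The slope of `t ↦ t * Psi x (s / t)` is `(max 0 (2 * x + s / t) - s / t) ^ 2 / 4`.
lemma sub_mul_sq_le_mul_Psi_sub_mul_Psi (x : ℝ) {s a b : ℝ} (hs : 0 ≤ s) (hb : 0 < b)
    (hba : b ≤ a) : (a - b) * max 0 x ^ 2 ≤ a * Psi x (s / a) - b * Psi x (s / b) := by
  have ha : 0 < a := hb.trans_le hba
  rw [mul_Psi_div x s ha, mul_Psi_div x s hb, div_sub_div _ _ (by positivity) (by positivity),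
    le_div_iff₀ (by positivity)]
  have hab : 0 ≤ a - b := sub_nonneg.2 hba
  rcases le_total 0 (2 * b * x + s) with hB | hB
  · rcases le_total 0 (2 * a * x + s) with hA | hA
    · have hx : max 0 x ^ 2 ≤ x ^ 2 := by
        rcases le_total 0 x with hx | hx <;> simp [hx, sq_nonneg]
      rw [max_eq_right hA, max_eq_right hB]
      nlinarith [mul_le_mul_of_nonneg_left hx (mul_nonneg (mul_nonneg ha.le hb.le) hab)]
    · have hx : x ≤ 0 := by nlinarith
      rw [max_eq_left hx, max_eq_left hA, max_eq_right hB]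
      nlinarith [mul_nonneg hb.le (mul_nonneg (neg_nonneg.2 hA) hB),
        mul_nonneg hb.le (mul_nonneg (mul_nonneg hs hab) (neg_nonneg.2 hx))]
  · have hx : x ≤ 0 := by nlinarith
    have hA : 2 * a * x + s ≤ 0 := by nlinarith
    rw [max_eq_left hx, max_eq_left hA, max_eq_left hB]
    nlinarith [mul_nonneg (sq_nonneg s) hab]

lemma tendsto_zero_of_le_add_sub {ι : Type*} {l : Filter ι} {v ε : ι → ℝ} {G H : ι → EReal}
    {D : ℝ}
    (hv₀ : ∀ k, 0 ≤ v k) (hv : ∀ k, (v k : EReal) ≤ G k + ε k - H k) (hG : ∀ k, G k ≤ D)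
    (hε : Tendsto ε l (𝓝 0)) (hH : Tendsto H l (𝓝 D)) :
    Tendsto v l (𝓝 0) := by
  have hlim : Tendsto (fun k => (D : EReal) + ε k - H k) l (𝓝 0) := by
    have h1 : Tendsto (fun k => ((D + ε k : ℝ) : EReal)) l (𝓝 (D : EReal)) := by
      simpa using EReal.tendsto_coe.2 (hε.const_add D)
    have := (EReal.continuousAt_add (p := ((D : EReal), -(D : EReal))) (by simp)
      (by simp)).tendsto.comp (h1.prodMk_nhds hH.neg)
    simpa [sub_eq_add_neg, Function.comp_def, ← EReal.coe_neg, ← EReal.coe_add] using this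
  refine EReal.tendsto_coe.1 (tendsto_of_tendsto_of_tendsto_of_le_of_le tendsto_const_nhds hlim
    (fun k => EReal.coe_nonneg.2 (hv₀ k)) fun k => (hv k).trans ?_)
  exact EReal.sub_le_sub (add_le_add (hG k) le_rfl) le_rfl

lemma tendsto_zero_of_tendsto_sum_sq {α ι : Type*} {l : Filter α} {s : Finset ι} {u : α → ι → ℝ}
    (h : Tendsto (fun k => ∑ i ∈ s, u k i ^ 2) l (𝓝 0)) {i : ι} (hi : i ∈ s) :
    Tendsto (fun k => u k i) l (𝓝 0) := by
  have hsq : Tendsto (fun k => u k i ^ 2) l (𝓝 0) :=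
    squeeze_zero (fun k => sq_nonneg _)
      (fun k => Finset.single_le_sum (f := fun j => u k j ^ 2) (fun j _ => sq_nonneg _) hi) h
  have habs := hsq.sqrt
  rw [Real.sqrt_zero] at habs
  simp only [Real.sqrt_sq_eq_abs] at habs
  exact (tendsto_zero_iff_abs_tendsto_zero _).2 habs

lemma sub_mul_sum_sq_le_augL_sub_augL {Θ : Type*} {m : ℕ} (ℓ₀ : Θ → ℝ) (ℓ : Fin m → Θ → ℝ)
    (θ : Θ) {lam : Fin m → ℝ} (hlam : ∀ i, 0 ≤ lam i) {a b : ℝ} (hb : 0 < b) (hba : b ≤ a) :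
    (a - b) * ∑ i, max 0 (ℓ i θ) ^ 2 ≤ augL ℓ₀ ℓ θ lam a - augL ℓ₀ ℓ θ lam b := by
  calc (a - b) * ∑ i, max 0 (ℓ i θ) ^ 2
      ≤ ∑ i, (a * Psi (ℓ i θ) (lam i / a) - b * Psi (ℓ i θ) (lam i / b)) := by
        rw [Finset.mul_sum]
        exact Finset.sum_le_sum fun i _ =>
          sub_mul_sq_le_mul_Psi_sub_mul_Psi _ (hlam i) hb hba
    _ = augL ℓ₀ ℓ θ lam a - augL ℓ₀ ℓ θ lam b := by
        simp only [augL, Finset.sum_sub_distrib, ← Finset.mul_sum]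
        ring

theorem asymptotic_feasibility_general {Θ : Type*} {m : ℕ}
    (ℓ₀ : Θ → ℝ) (ℓ : Fin m → Θ → ℝ)
    (δ : ℝ) (hδ : 0 < δ)
    (lam : ℕ → Fin m → ℝ) (hlam : ∀ k i, 0 ≤ lam k i)
    (α : ℕ → ℝ) (hα : ∀ k, δ < α k)
    (θseq : ℕ → Θ) (ε : ℕ → ℝ)
    (hεlim : Tendsto ε atTop (nhds 0))
    (supD : EReal) (hsupD : supD = ⨆ l : Fin m → ℝ, ⨆ a : ℝ, ⨆ _ : 0 < a, augG ℓ₀ ℓ l a)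
    (hsupD_fin : supD ≠ ⊤)
    (happrox : ∀ k, ((augL ℓ₀ ℓ (θseq k) (lam k) (α k) : ℝ) : EReal)
        ≤ augG ℓ₀ ℓ (lam k) (α k) + ((ε k : ℝ) : EReal))
    (htend : Tendsto (fun k => augG ℓ₀ ℓ (lam k) (α k - δ)) atTop (nhds supD)) :
    (∀ i, Filter.limsup (fun k => max 0 (ℓ i (θseq k))) atTop = 0) ∧
      ∀ k,
        δ * ∑ i, (max 0 (ℓ i (θseq k))) ^ 2
            ≤ augL ℓ₀ ℓ (θseq k) (lam k) (α k) - augL ℓ₀ ℓ (θseq k) (lam k) (α k - δ) ∧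
        ((augL ℓ₀ ℓ (θseq k) (lam k) (α k)
            - augL ℓ₀ ℓ (θseq k) (lam k) (α k - δ) : ℝ) : EReal)
          ≤ augG ℓ₀ ℓ (lam k) (α k) + ((ε k : ℝ) : EReal)
              - augG ℓ₀ ℓ (lam k) (α k - δ) := by
  have hpenalty : ∀ k, δ * ∑ i, max 0 (ℓ i (θseq k)) ^ 2
      ≤ augL ℓ₀ ℓ (θseq k) (lam k) (α k) - augL ℓ₀ ℓ (θseq k) (lam k) (α k - δ) := fun k => by
    simpa using sub_mul_sum_sq_le_augL_sub_augL ℓ₀ ℓ (θseq k) (hlam k) (sub_pos.2 (hα k))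
      (sub_le_self _ hδ.le)
  have hgap : ∀ k, ((augL ℓ₀ ℓ (θseq k) (lam k) (α k)
      - augL ℓ₀ ℓ (θseq k) (lam k) (α k - δ) : ℝ) : EReal)
      ≤ augG ℓ₀ ℓ (lam k) (α k) + ((ε k : ℝ) : EReal) - augG ℓ₀ ℓ (lam k) (α k - δ) :=
    fun k => by
      rw [EReal.coe_sub]
      exact EReal.sub_le_sub (happrox k) (iInf_le _ (θseq k))
  refine ⟨fun i => ?_, fun k => ⟨hpenalty k, hgap k⟩⟩
  have hG : ∀ k, augG ℓ₀ ℓ (lam k) (α k) ≤ supD := fun k => by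
    rw [hsupD]
    exact le_iSup₂_of_le (lam k) (α k) (le_iSup_of_le (hδ.trans (hα k)) le_rfl)
  have hsupD_ne_bot : supD ≠ ⊥ := by
    rintro rfl
    have h := happrox 0
    rw [le_bot_iff.1 (hG 0), EReal.bot_add] at h
    exact EReal.coe_ne_bot _ (le_bot_iff.1 h)
  lift supD to ℝ using ⟨hsupD_fin, hsupD_ne_bot⟩
  have hsum : Tendsto (fun k => δ * ∑ i, max 0 (ℓ i (θseq k)) ^ 2) atTop (nhds 0) :=
    tendsto_zero_of_le_add_sub (fun k => by positivity)
      (fun k => (EReal.coe_le_coe_iff.2 (hpenalty k)).trans (hgap k)) hG hεlim htend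
  replace hsum : Tendsto (fun k => ∑ i, max 0 (ℓ i (θseq k)) ^ 2) atTop (nhds 0) := by
    simpa [hδ.ne'] using hsum.const_mul δ⁻¹
  exact (tendsto_zero_of_tendsto_sum_sq hsum (Finset.mem_univ i)).limsup_eq

/-- Asymptotic feasibility of near-optimal primal iterates of the augmented dual ascent. -/
theorem asymptotic_feasibility {Θ : Type*} {m : ℕ}
    (ℓ₀ : Θ → ℝ) (ℓ : Fin m → Θ → ℝ) (c : ℝ) (hc : ∀ θ, c ≤ ℓ₀ θ)
    (δ : ℝ) (hδ : 0 < δ)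
    (lam : ℕ → Fin m → ℝ) (hlam : ∀ k i, 0 ≤ lam k i)
    (α : ℕ → ℝ) (hα : ∀ k, δ < α k)
    (θseq : ℕ → Θ) (ε : ℕ → ℝ) (hε0 : ∀ k, 0 ≤ ε k)
    (hεlim : Tendsto ε atTop (nhds 0))
    (supD : EReal) (hsupD : supD = ⨆ l : Fin m → ℝ, ⨆ a : ℝ, ⨆ _ : 0 < a, augG ℓ₀ ℓ l a)
    (hsupD_fin : supD ≠ ⊤)
    (happrox : ∀ k, ((augL ℓ₀ ℓ (θseq k) (lam k) (α k) : ℝ) : EReal)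
        ≤ augG ℓ₀ ℓ (lam k) (α k) + ((ε k : ℝ) : EReal))
    (htend : Tendsto (fun k => augG ℓ₀ ℓ (lam k) (α k - δ)) atTop (nhds supD)) :
    (∀ i, Filter.limsup (fun k => max 0 (ℓ i (θseq k))) atTop = 0) ∧
      ∀ k,
        δ * ∑ i, (max 0 (ℓ i (θseq k))) ^ 2
            ≤ augL ℓ₀ ℓ (θseq k) (lam k) (α k) - augL ℓ₀ ℓ (θseq k) (lam k) (α k - δ) ∧
        ((augL ℓ₀ ℓ (θseq k) (lam k) (α k)
            - augL ℓ₀ ℓ (θseq k) (lam k) (α k - δ) : ℝ) : EReal)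
          ≤ augG ℓ₀ ℓ (lam k) (α k) + ((ε k : ℝ) : EReal)
              - augG ℓ₀ ℓ (lam k) (α k - δ) :=
  asymptotic_feasibility_general ℓ₀ ℓ δ hδ lam hlam α hα θseq ε hεlim supD hsupD hsupD_fin happrox
    htend
end

section
/- If Θ ⊆ ℝ^p is closed, each ℓᵢ : Θ → ℝ (i = 0,…,m) is continuous, and the level set {θ ∈ Θ : ℓ₀(θ) ≤ p̄, ℓᵢ(θ) ≤ u ∀i} is compact and nonempty for some u > 0 and p̄ > inf over feasible θ of ℓ₀, then the perturbation function p(v) = inf{ℓ₀(θ) : ℓᵢ(θ) ≤ vᵢ ∀i} is lower semicontinuous at v = 0, i.e., liminf_{v → 0} p(v) ≥ p(0). -/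
/-!
Take a real `c` with `y < c < min (p 0) p̄`. The points of `Θ` with `ℓ₀ ≤ c` and all `ℓᵢ ≤ u`
form a compact set on which no point is feasible for `v = 0`, so some constraint is violated
at each of them. By compactness the violation is uniform, `maxᵢ ℓᵢ ≥ δ > 0`, hence for
`v` with all `vᵢ < min δ u` every `v`-feasible point has `ℓ₀ > c`, i.e. `p v ≥ c > y`.
-/

open Filter Topology Set

section Perturbation

variable {X ι : Type*}

/-- The paper's `p`; it is `⊤` when no point is `v`-feasible. -/
noncomputable def perturbation (Θ : Set X) (ℓ₀ : X → ℝ) (ℓ : ι → X → ℝ) (v : ι → ℝ) : EReal :=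
  ⨅ θ : {θ : X // θ ∈ Θ ∧ ∀ i, ℓ i θ ≤ v i}, ((ℓ₀ θ : ℝ) : EReal)

variable {Θ : Set X} {ℓ₀ : X → ℝ} {ℓ : ι → X → ℝ} {v : ι → ℝ}

theorem perturbation_le {θ : X} (hθ : θ ∈ Θ) (hv : ∀ i, ℓ i θ ≤ v i) :
    perturbation Θ ℓ₀ ℓ v ≤ ℓ₀ θ :=
  iInf_le (fun θ : {θ : X // θ ∈ Θ ∧ ∀ i, ℓ i θ ≤ v i} => ((ℓ₀ θ : ℝ) : EReal)) ⟨θ, hθ, hv⟩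

theorem le_perturbation {c : EReal} (h : ∀ θ ∈ Θ, (∀ i, ℓ i θ ≤ v i) → c ≤ ℓ₀ θ) :
    c ≤ perturbation Θ ℓ₀ ℓ v :=
  le_iInf fun θ => h θ θ.2.1 θ.2.2

end Perturbation

theorem IsCompact.exists_pos_forall_exists_le {X ι : Type*} [TopologicalSpace X] [Finite ι]
    {K : Set X} {g : ι → X → ℝ} (hK : IsCompact K) (hg : ∀ i, ContinuousOn (g i) K)
    (hpos : ∀ θ ∈ K, ∃ i, 0 < g i θ) : ∃ δ > 0, ∀ θ ∈ K, ∃ i, δ ≤ g i θ := by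
  rcases K.eq_empty_or_nonempty with rfl | hne
  · exact ⟨1, one_pos, by simp⟩
  obtain ⟨i₀, -⟩ := hpos _ hne.some_mem
  have : Nonempty ι := ⟨i₀⟩
  have := Fintype.ofFinite ι
  have hmax : ContinuousOn (fun θ => Finset.univ.sup' Finset.univ_nonempty (g · θ)) K :=
    ContinuousOn.finset_sup'_apply _ fun i _ => hg i
  obtain ⟨θ₀, hθ₀, hmin⟩ := hK.exists_isMinOn hne hmax
  refine ⟨Finset.univ.sup' Finset.univ_nonempty (g · θ₀), ?_, fun θ hθ => ?_⟩
  · obtain ⟨j, hj⟩ := hpos θ₀ hθ₀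
    exact hj.trans_le (Finset.le_sup' (g · θ₀) (Finset.mem_univ j))
  · obtain ⟨j, -, hj⟩ := Finset.exists_mem_eq_sup' Finset.univ_nonempty (g · θ)
    exact ⟨j, hj ▸ hmin hθ⟩

theorem IsCompact.sep_le_of_le {X : Type*} [TopologicalSpace X] [T2Space X] {Θ : Set X}
    {f : X → ℝ} {P : X → Prop} {b c : ℝ} (hf : ContinuousOn f Θ)
    (hK : IsCompact {θ ∈ Θ | f θ ≤ b ∧ P θ}) (hcb : c ≤ b) :
    IsCompact {θ ∈ Θ | f θ ≤ c ∧ P θ} := by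
  have hsub : {θ ∈ Θ | f θ ≤ c ∧ P θ} = {θ ∈ Θ | f θ ≤ b ∧ P θ} ∩ f ⁻¹' Iic c := by
    ext θ
    simp only [mem_ofPred_eq, mem_inter_iff, mem_preimage, mem_Iic]
    exact ⟨fun ⟨hθ, hc, hP⟩ => ⟨⟨hθ, hc.trans hcb, hP⟩, hc⟩,
      fun ⟨⟨hθ, _, hP⟩, hc⟩ => ⟨hθ, hc, hP⟩⟩
  rw [hsub]
  exact hK.of_isClosed_subset
    ((hf.mono fun θ hθ => hθ.1).preimage_isClosed_of_isClosed hK.isClosed isClosed_Iic)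
    inter_subset_left

theorem eventually_coe_le_perturbation {X ι : Type*} [TopologicalSpace X] [Finite ι]
    {Θ : Set X} {ℓ₀ : X → ℝ} {ℓ : ι → X → ℝ} (hℓ : ∀ i, ContinuousOn (ℓ i) Θ) {c u : ℝ}
    (hu : 0 < u) (hc : (c : EReal) < perturbation Θ ℓ₀ ℓ 0)
    (hK : IsCompact {θ ∈ Θ | ℓ₀ θ ≤ c ∧ ∀ i, ℓ i θ ≤ u}) :
    ∀ᶠ v in 𝓝 0, (c : EReal) ≤ perturbation Θ ℓ₀ ℓ v := by
  have hviolated : ∀ θ ∈ {θ ∈ Θ | ℓ₀ θ ≤ c ∧ ∀ i, ℓ i θ ≤ u}, ∃ i, 0 < ℓ i θ := by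
    rintro θ ⟨hθ, hθc, -⟩
    by_contra! hfeas
    exact (hc.trans_le ((perturbation_le hθ hfeas).trans (EReal.coe_le_coe_iff.2 hθc))).false
  obtain ⟨δ, hδ, hδK⟩ :=
    hK.exists_pos_forall_exists_le (fun i => (hℓ i).mono fun θ hθ => hθ.1) hviolated
  have hsmall : ∀ᶠ v : ι → ℝ in 𝓝 0, ∀ i, v i < min δ u :=
    eventually_all.2 fun i =>
      (continuous_apply i).continuousAt.eventually (Iio_mem_nhds (lt_min hδ hu))
  filter_upwards [hsmall] with v hv
  refine le_perturbation fun θ hθ hθv => ?_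
  by_contra! hlt
  obtain ⟨i, hi⟩ := hδK θ ⟨hθ, (EReal.coe_lt_coe_iff.1 hlt).le,
    fun i => (hθv i).trans ((hv i).le.trans (min_le_right _ _))⟩
  exact (hi.trans (hθv i)).not_gt ((hv i).trans_le (min_le_left _ _))

theorem perturbation_lsc_at_zero_general {p m : ℕ}
    (Θ : Set (Fin p → ℝ))
    (ℓ₀ : (Fin p → ℝ) → ℝ) (ℓ : Fin m → (Fin p → ℝ) → ℝ)
    (hℓ₀ : ContinuousOn ℓ₀ Θ) (hℓ : ∀ i, ContinuousOn (ℓ i) Θ)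
    (u : ℝ) (hu : 0 < u) (pbar : ℝ)
    (hpbar : (⨅ θ : {θ : Fin p → ℝ // θ ∈ Θ ∧ ∀ i, ℓ i θ ≤ 0}, ((ℓ₀ θ : ℝ) : EReal))
        < ((pbar : ℝ) : EReal))
    (hcompact : IsCompact {θ ∈ Θ | ℓ₀ θ ≤ pbar ∧ ∀ i, ℓ i θ ≤ u}) :
    LowerSemicontinuousAt
      (fun v : Fin m → ℝ =>
        ⨅ θ : {θ : Fin p → ℝ // θ ∈ Θ ∧ ∀ i, ℓ i θ ≤ v i}, ((ℓ₀ θ : ℝ) : EReal))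
      0 := by
  change LowerSemicontinuousAt (perturbation Θ ℓ₀ ℓ) 0
  intro y hy
  obtain ⟨c, hyc, hc⟩ := EReal.exists_between_coe_real (lt_min hy (hy.trans hpbar))
  have hcpbar : c ≤ pbar := EReal.coe_le_coe_iff.1 (hc.le.trans (min_le_right _ _))
  filter_upwards [eventually_coe_le_perturbation hℓ hu (hc.trans_le (min_le_left _ _))
    (hcompact.sep_le_of_le hℓ₀ hcpbar)] with v hv
  exact hyc.trans_le hv

/-- Stability of degree 0: under closedness, continuity and a compact feasible level
set, the perturbation function is lower semicontinuous at `0`. -/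
theorem perturbation_lsc_at_zero {p m : ℕ}
    (Θ : Set (Fin p → ℝ)) (hΘ : IsClosed Θ)
    (ℓ₀ : (Fin p → ℝ) → ℝ) (ℓ : Fin m → (Fin p → ℝ) → ℝ)
    (hℓ₀ : ContinuousOn ℓ₀ Θ) (hℓ : ∀ i, ContinuousOn (ℓ i) Θ)
    (hfeas : ∃ θ ∈ Θ, ∀ i, ℓ i θ ≤ 0)
    (u : ℝ) (hu : 0 < u) (pbar : ℝ)
    (hpbar : (⨅ θ : {θ : Fin p → ℝ // θ ∈ Θ ∧ ∀ i, ℓ i θ ≤ 0}, ((ℓ₀ θ : ℝ) : EReal))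
        < ((pbar : ℝ) : EReal))
    (hcompact : IsCompact {θ ∈ Θ | ℓ₀ θ ≤ pbar ∧ ∀ i, ℓ i θ ≤ u})
    (hlevelne : {θ ∈ Θ | ℓ₀ θ ≤ pbar ∧ ∀ i, ℓ i θ ≤ u}.Nonempty) :
    LowerSemicontinuousAt
      (fun v : Fin m → ℝ =>
        ⨅ θ : {θ : Fin p → ℝ // θ ∈ Θ ∧ ∀ i, ℓ i θ ≤ v i}, ((ℓ₀ θ : ℝ) : EReal))
      0 :=
  perturbation_lsc_at_zero_general Θ ℓ₀ ℓ hℓ₀ hℓ u hu pbar hpbar hcompact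
end
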